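/- Fix real parameters α > 0 and β > 0. For every p ≥ 1 and all x ∈ [0,1]^p with x ≠ 0, Δ_CTL(x,x) = 0 (reflexivity); and for all x, y ∈ [0,1]^p with x + y ≠ 0 and x ≠ y, Δ_CTL(x,y) > 0 (positivity). -/
import Mathlib


open Finset

/-- The L¹ norm of a vector. -/
noncomputable def l1 {p : ℕ} (z : Fin p → ℝ) : ℝ := ∑ i, |z i|

/-- The compatible Tversky loss with parameters `α`, `β`. -/
noncomputable def CTL (α β : ℝ) {p : ℕ} (x y : Fin p → ℝ) : ℝ :=
  1 - (l1 (x + y) - l1 (x - y)) /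
    (2 * α * l1 x + 2 * β * l1 y + (1 - α - β) * (l1 (x + y) - l1 (x - y)))

/-- Appendix E: the compatible Tversky loss satisfies reflexivity and
positivity. -/
theorem ctl_reflexivity_positivity (α β : ℝ) (hα : 0 < α) (hβ : 0 < β)
    {p : ℕ} (hp : 1 ≤ p) :
    (∀ x : Fin p → ℝ, (∀ i, 0 ≤ x i ∧ x i ≤ 1) → x ≠ 0 → CTL α β x x = 0) ∧
    (∀ x y : Fin p → ℝ, (∀ i, 0 ≤ x i ∧ x i ≤ 1) → (∀ i, 0 ≤ y i ∧ y i ≤ 1) →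
      x + y ≠ 0 → x ≠ y → 0 < CTL α β x y) := by
  have key : ∀ x y : Fin p → ℝ, (∀ i, 0 ≤ x i) → (∀ i, 0 ≤ y i) →
      l1 (x + y) - l1 (x - y) = 2 * ∑ i, min (x i) (y i) := by
    intro x y hx hy
    unfold l1
    rw [← Finset.sum_sub_distrib, Finset.mul_sum]
    apply Finset.sum_congr rfl
    intro i _
    simp only [Pi.add_apply, Pi.sub_apply]
    rcases le_total (x i) (y i) with h | h
    · rw [min_eq_left h, abs_of_nonneg (by linarith [hx i, hy i]),
        abs_of_nonpos (by linarith)]; ring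
    · rw [min_eq_right h, abs_of_nonneg (by linarith [hx i, hy i]),
        abs_of_nonneg (by linarith)]; ring
  constructor
  · intro x hx hx0
    have hX : 0 < l1 x := by
      have : ∃ i, x i ≠ 0 := by
        by_contra h; push_neg at h; exact hx0 (funext h)
      obtain ⟨i, hi⟩ := this
      exact Finset.sum_pos' (fun j _ => abs_nonneg _)
        ⟨i, Finset.mem_univ i, abs_pos.2 hi⟩
    have hm : ∑ i, min (x i) (x i) = l1 x := by
      unfold l1
      apply Finset.sum_congr rfl
      intro i _
      rw [min_self, abs_of_nonneg (hx i).1]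
    unfold CTL
    rw [key x x (fun i => (hx i).1) (fun i => (hx i).1), hm]
    have hd : 2 * α * l1 x + 2 * β * l1 x + (1 - α - β) * (2 * l1 x)
        = 2 * l1 x := by ring
    rw [hd, div_self (by positivity), sub_self]
  · intro x y hx hy _ hxy
    set X := l1 x with hXdef
    set Y := l1 y with hYdef
    set m := ∑ i, min (x i) (y i) with hmdef
    have hm0 : 0 ≤ m := Finset.sum_nonneg fun i _ => le_min (hx i).1 (hy i).1
    have hXm : m ≤ X := by
      apply Finset.sum_le_sum
      intro i _
      exact (min_le_left _ _).trans (le_abs_self _)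
    have hYm : m ≤ Y := by
      apply Finset.sum_le_sum
      intro i _
      exact (min_le_right _ _).trans (le_abs_self _)
    have hS : 0 < α * (X - m) + β * (Y - m) := by
      have hex : ∃ i, x i ≠ y i := by
        by_contra h; push_neg at h; exact hxy (funext h)
      obtain ⟨i, hi⟩ := hex
      rcases lt_or_gt_of_ne hi with h | h
      · have hYm' : m < Y := by
          apply Finset.sum_lt_sum
            (fun j _ => (min_le_right _ _).trans (le_abs_self _))
          refine ⟨i, Finset.mem_univ i, ?_⟩
          rw [min_eq_left h.le, abs_of_nonneg (hy i).1]; exact h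
        nlinarith
      · have hXm' : m < X := by
          apply Finset.sum_lt_sum
            (fun j _ => (min_le_left _ _).trans (le_abs_self _))
          refine ⟨i, Finset.mem_univ i, ?_⟩
          rw [min_eq_right h.le, abs_of_nonneg (hx i).1]; exact h
        nlinarith
    have hD : 2 * α * X + 2 * β * Y + (1 - α - β) * (2 * m)
        = 2 * (α * (X - m) + β * (Y - m) + m) := by ring
    unfold CTL
    rw [key x y (fun i => (hx i).1) (fun i => (hy i).1), ← hmdef, ← hXdef, ← hYdef, hD]
    have hDpos : 0 < 2 * (α * (X - m) + β * (Y - m) + m) := by linarith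
    have : 2 * m / (2 * (α * (X - m) + β * (Y - m) + m)) < 1 := by
      rw [div_lt_one hDpos]; linarith
    linarith
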